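/- Let M ≥ 4 be an even integer and γ > 0. For each k ∈ {1,…,M/2−1} let a_k ∈ ℝ with |a_k| ≤ γ, let c_k ∈ [−1,1], and let u_k ∈ ℝ. Assume (Mean({u_k}_{k=1,…,M/2−1}))² ≤ 1 and Var({u_k}_{k=1,…,M/2−1}) ≤ 4. Define v_0 := 0 and v_k := √M · a_k · u_k · c_k for k ∈ {1,…,M/2−1}. Then Var({v_k}_{k=0,…,M/2−1}) ≤ 5·M·γ². -/

import Mathlib

/-- Sample mean of the family `{f k}_{k ∈ s}`. -/
noncomputable def fMean (s : Finset ℕ) (f : ℕ → ℝ) : ℝ := (∑ k ∈ s, f k) / s.card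

/-- Sample variance of the family `{f k}_{k ∈ s}`. -/
noncomputable def fVar (s : Finset ℕ) (f : ℕ → ℝ) : ℝ :=
  (∑ k ∈ s, (f k - fMean s f) ^ 2) / s.card

/-! The variance is at most the mean of the squares, and the mean of the squares of `v` is
controlled termwise by `M γ²` times that of `u`, which is `Var u + (Mean u)² ≤ 5`. The point
`v 0 = 0` only enlarges the denominator. -/

open Finset

theorem sum_sq_eq_card_mul_fVar_add_fMean_sq (s : Finset ℕ) (f : ℕ → ℝ) :
    ∑ k ∈ s, f k ^ 2 = s.card * (fVar s f + fMean s f ^ 2) := by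
  rcases s.eq_empty_or_nonempty with rfl | hs
  · simp
  have hcard : (s.card : ℝ) ≠ 0 := by exact_mod_cast hs.card_ne_zero
  have hsum : ∑ k ∈ s, f k = s.card * fMean s f := by
    rw [fMean]; field_simp
  have hexpand : ∑ k ∈ s, (f k - fMean s f) ^ 2
      = ∑ k ∈ s, f k ^ 2 - 2 * fMean s f * ∑ k ∈ s, f k + s.card * fMean s f ^ 2 := by
    simp only [sub_sq, sum_add_distrib, sum_sub_distrib, sum_const, nsmul_eq_mul, ← sum_mul,
      ← mul_sum]
    ring
  rw [fVar, hexpand, hsum]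
  field_simp
  ring

theorem fVar_le_sum_sq_div_card (s : Finset ℕ) (f : ℕ → ℝ) :
    fVar s f ≤ (∑ k ∈ s, f k ^ 2) / s.card := by
  rcases s.eq_empty_or_nonempty with rfl | hs
  · simp [fVar]
  have hcard : (0 : ℝ) < s.card := by exact_mod_cast hs.card_pos
  rw [sum_sq_eq_card_mul_fVar_add_fMean_sq, mul_div_cancel_left₀ _ hcard.ne']
  linarith [sq_nonneg (fMean s f)]

theorem sum_range_eq_sum_Icc_one_of_eq_zero (n : ℕ) (f : ℕ → ℝ) (h0 : f 0 = 0) :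
    ∑ k ∈ range n, f k = ∑ k ∈ Icc 1 (n - 1), f k := by
  refine (sum_subset (fun k hk => ?_) fun k hk hk' => ?_).symm
  · simp only [mem_Icc] at hk
    exact mem_range.mpr (by omega)
  · obtain rfl : k = 0 := by simp only [mem_range, mem_Icc] at hk hk'; omega
    exact h0

theorem sq_sqrt_mul_mul_mul_le {x a u c γ : ℝ} (hx : 0 ≤ x) (ha : |a| ≤ γ)
    (hc : c ∈ Set.Icc (-1 : ℝ) 1) :
    (Real.sqrt x * a * u * c) ^ 2 ≤ x * γ ^ 2 * u ^ 2 := by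
  have ha2 : a ^ 2 ≤ γ ^ 2 := sq_le_sq.mpr (ha.trans (le_abs_self γ))
  have hc2 : c ^ 2 ≤ 1 := sq_le_one_iff_abs_le_one c |>.mpr (abs_le.mpr hc)
  calc (Real.sqrt x * a * u * c) ^ 2 = x * (a ^ 2 * u ^ 2 * c ^ 2) := by
        rw [mul_pow, mul_pow, mul_pow, Real.sq_sqrt hx]; ring
    _ ≤ x * (γ ^ 2 * u ^ 2 * 1) := by gcongr
    _ = x * γ ^ 2 * u ^ 2 := by ring

theorem var_le_five_M_gamma_sq_general (M : ℕ)
    (γ : ℝ) (a c u : ℕ → ℝ)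
    (ha : ∀ k ∈ Finset.Icc 1 (M / 2 - 1), |a k| ≤ γ)
    (hc : ∀ k ∈ Finset.Icc 1 (M / 2 - 1), c k ∈ Set.Icc (-1 : ℝ) 1)
    (hum : (fMean (Finset.Icc 1 (M / 2 - 1)) u) ^ 2 ≤ 1)
    (huv : fVar (Finset.Icc 1 (M / 2 - 1)) u ≤ 4)
    (v : ℕ → ℝ) (hv0 : v 0 = 0)
    (hv : ∀ k ∈ Finset.Icc 1 (M / 2 - 1),
      v k = Real.sqrt M * a k * u k * c k) :
    fVar (Finset.range (M / 2)) v ≤ 5 * M * γ ^ 2 := by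
  set s := Icc 1 (M / 2 - 1)
  have hsum_u : ∑ k ∈ s, u k ^ 2 ≤ s.card * 5 := by
    rw [sum_sq_eq_card_mul_fVar_add_fMean_sq]
    gcongr
    linarith
  have hsum_v : ∑ k ∈ range (M / 2), v k ^ 2 ≤ M * γ ^ 2 * (s.card * 5) :=
    calc ∑ k ∈ range (M / 2), v k ^ 2 = ∑ k ∈ s, v k ^ 2 :=
          sum_range_eq_sum_Icc_one_of_eq_zero _ _ (by simp [hv0])
      _ ≤ ∑ k ∈ s, M * γ ^ 2 * u k ^ 2 := sum_le_sum fun k hk => by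
          rw [hv k hk]; exact sq_sqrt_mul_mul_mul_le (Nat.cast_nonneg M) (ha k hk) (hc k hk)
      _ ≤ M * γ ^ 2 * (s.card * 5) := by rw [← mul_sum]; gcongr
  have hcard : (s.card : ℝ) ≤ (range (M / 2)).card := by
    exact_mod_cast card_le_card fun k hk => by simp only [s, mem_Icc, mem_range] at hk ⊢; omega
  calc fVar (range (M / 2)) v ≤ (∑ k ∈ range (M / 2), v k ^ 2) / (range (M / 2)).card :=
        fVar_le_sum_sq_div_card _ _
    _ ≤ 5 * M * γ ^ 2 * (s.card / (range (M / 2)).card) := by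
        rw [mul_div_assoc']; gcongr; linarith
    _ ≤ 5 * M * γ ^ 2 :=
        mul_le_of_le_one_right (by positivity) (div_le_one_of_le₀ hcard (by positivity))

/-- For `k ∈ {1,…,M/2−1}` let `|a k| ≤ γ`, `c k ∈ [−1,1]`, and assume
`(Mean u)² ≤ 1` and `Var u ≤ 4` over `{1,…,M/2−1}`. Then the family
`v 0 = 0`, `v k = √M · a k · u k · c k` has sample variance at most `5·M·γ²`
over `{0,…,M/2−1}`. -/
theorem var_le_five_M_gamma_sq (M : ℕ) (hM4 : 4 ≤ M) (hMe : Even M)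
    (γ : ℝ) (hγ : 0 < γ) (a c u : ℕ → ℝ)
    (ha : ∀ k ∈ Finset.Icc 1 (M / 2 - 1), |a k| ≤ γ)
    (hc : ∀ k ∈ Finset.Icc 1 (M / 2 - 1), c k ∈ Set.Icc (-1 : ℝ) 1)
    (hum : (fMean (Finset.Icc 1 (M / 2 - 1)) u) ^ 2 ≤ 1)
    (huv : fVar (Finset.Icc 1 (M / 2 - 1)) u ≤ 4)
    (v : ℕ → ℝ) (hv0 : v 0 = 0)
    (hv : ∀ k ∈ Finset.Icc 1 (M / 2 - 1),
      v k = Real.sqrt M * a k * u k * c k) :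
    fVar (Finset.range (M / 2)) v ≤ 5 * M * γ ^ 2 :=
  var_le_five_M_gamma_sq_general M γ a c u ha hc hum huv v hv0 hv
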